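/- arXiv:1406.3619 — 7 statements merged into one kernel-verified Lean document; each statement's English description precedes it below -/
import Mathlib

section
/- For every integer $n \ge 1$ and real numbers $a > 0$, $c > 0$, $\int_0^\infty \ln(1 + a y)\, y^{n-1} e^{-c y} \, dy = (n-1)!\, e^{c/a} \sum_{k=1}^{n} \frac{1}{c^k \, a^{n-k}} \int_{c/a}^{\infty} t^{k-n-1} e^{-t} \, dt$. -/
/-!
Write `L m = ∫₀^∞ log (1 + a y) y^m e^{-cy} dy` (`logMoment`) and
`R m j = ∫₀^∞ y^m (1 + a y)^{-j} e^{-cy} dy` (`ratMoment`). The substitution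
`t = (c/a)(1 + a y)` turns the `k`-th summand on the right into `a c^{-n} R 0 (n - k + 1)`,
so the claim is `L m = m! a c^{-m-1} ∑_{j=1}^{m+1} R 0 j`. Integrating by parts,
`c L m = m L (m-1) + a R m 1`, which reduces everything to `c^n R n 1 = n! R 0 (n+1)`.
That follows by induction from `a R (n+1) 1 = n!/c^{n+1} - R n 1`
(as `a y / (1 + a y) = 1 - 1 / (1 + a y)`) and the integration by parts
`n a R 0 (n+1) + c R 0 n = 1`.
-/

open MeasureTheory Set Filter Topology Real
open scoped Nat

section ExpDecay

variable {c : ℝ}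

theorem integrableOn_pow_mul_exp_neg_mul (hc : 0 < c) (m : ℕ) :
    IntegrableOn (fun y : ℝ => y ^ m * exp (-c * y)) (Ioi 0) := by
  refine (integrableOn_rpow_mul_exp_neg_mul_rpow (s := m) (neg_one_lt_zero.trans_le m.cast_nonneg)
    one_pos hc).congr_fun (fun y _ => ?_) measurableSet_Ioi
  simp only [rpow_natCast, rpow_one]

theorem integral_pow_mul_exp_neg_mul (hc : 0 < c) (m : ℕ) :
    ∫ y in Ioi (0 : ℝ), y ^ m * exp (-c * y) = m ! / c ^ (m + 1) := by
  have h := integral_rpow_mul_exp_neg_mul_Ioi (a := m + 1) (by positivity) hc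
  rw [add_sub_cancel_right, Gamma_nat_eq_factorial, one_div, inv_rpow hc.le,
    ← Nat.cast_add_one, rpow_natCast] at h
  rw [div_eq_inv_mul, ← h]
  refine setIntegral_congr_fun measurableSet_Ioi (fun y _ => ?_)
  simp only [rpow_natCast, neg_mul]

theorem tendsto_pow_mul_exp_neg_mul_atTop (hc : 0 < c) (m : ℕ) :
    Tendsto (fun y : ℝ => y ^ m * exp (-c * y)) atTop (𝓝 0) := by
  simpa only [rpow_natCast] using tendsto_rpow_mul_exp_neg_mul_atTop_nhds_zero m c hc

variable {g : ℝ → ℝ} {K : ℝ} {m : ℕ}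

theorem integrableOn_mul_exp_neg_mul_of_abs_le (hc : 0 < c) (hg : ContinuousOn g (Ioi 0))
    (hbound : ∀ y ∈ Ioi (0 : ℝ), |g y| ≤ K * y ^ m) :
    IntegrableOn (fun y => g y * exp (-c * y)) (Ioi 0) := by
  refine Integrable.mono' ((integrableOn_pow_mul_exp_neg_mul hc m).const_mul K)
    ((hg.mul (by fun_prop)).aestronglyMeasurable measurableSet_Ioi) ?_
  filter_upwards [ae_restrict_mem measurableSet_Ioi] with y hy
  rw [norm_mul, norm_eq_abs, norm_eq_abs, abs_exp, ← mul_assoc]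
  exact mul_le_mul_of_nonneg_right (hbound y hy) (exp_pos _).le

theorem tendsto_mul_exp_neg_mul_of_abs_le (hc : 0 < c)
    (hbound : ∀ y ∈ Ioi (0 : ℝ), |g y| ≤ K * y ^ m) :
    Tendsto (fun y => g y * exp (-c * y)) atTop (𝓝 0) := by
  refine squeeze_zero_norm' ?_
    (by simpa only [mul_zero] using (tendsto_pow_mul_exp_neg_mul_atTop hc m).const_mul K)
  filter_upwards [eventually_gt_atTop 0] with y hy
  rw [norm_mul, norm_eq_abs, norm_eq_abs, abs_exp, ← mul_assoc]
  exact mul_le_mul_of_nonneg_right (hbound y hy) (exp_pos _).le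

end ExpDecay

section Derivatives

variable {a y : ℝ}

theorem hasDerivAt_exp_neg_mul (c y : ℝ) :
    HasDerivAt (fun y => exp (-c * y)) (-c * exp (-c * y)) y := by
  simpa [mul_comm] using ((hasDerivAt_id y).const_mul (-c)).exp

theorem hasDerivAt_log_one_add_mul (h : 0 < 1 + a * y) :
    HasDerivAt (fun y => log (1 + a * y)) (a / (1 + a * y)) y := by
  simpa using (((hasDerivAt_id y).const_mul a).const_add 1).log h.ne'

theorem hasDerivAt_inv_one_add_mul_pow (h : 0 < 1 + a * y) (n : ℕ) :
    HasDerivAt (fun y => ((1 + a * y) ^ n)⁻¹) (-(n * a) / (1 + a * y) ^ (n + 1)) y := by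
  have := (hasDerivAt_zpow (-(n : ℤ)) (1 + a * y) (Or.inl h.ne')).comp y
    (((hasDerivAt_id y).const_mul a).const_add 1)
  refine (this.congr_deriv ?_).congr_of_eventuallyEq (.of_forall fun x => ?_)
  · rw [show -(n : ℤ) - 1 = -((n + 1 : ℕ) : ℤ) by push_cast; ring, zpow_neg, zpow_natCast]
    push_cast
    ring
  · simp

end Derivatives

theorem integral_Ioi_comp_add_mul (g : ℝ → ℝ) (p : ℝ) {q : ℝ} (hq : 0 < q) :
    ∫ y in Ioi 0, g (p + q * y) = q⁻¹ * ∫ t in Ioi p, g t := by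
  have himage : (fun y => p + q * y) '' Ioi 0 = Ioi p := by
    rw [← image_image (p + ·) (q * ·), image_mul_left_Ioi hq, image_const_add_Ioi, mul_zero,
      add_zero]
  have hderiv : ∀ y ∈ Ioi (0 : ℝ), HasDerivWithinAt (fun y => p + q * y) q (Ioi 0) y :=
    fun y _ => by simpa using (((hasDerivAt_id y).const_mul q).const_add p).hasDerivWithinAt
  rw [← himage, integral_image_eq_integral_abs_deriv_smul measurableSet_Ioi hderiv
    fun x _ y _ h => by simpa [hq.ne'] using h, abs_of_pos hq]
  simp [integral_const_mul, hq.ne']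

section Moments

variable {a c : ℝ}

noncomputable def ratMoment (a c : ℝ) (m j : ℕ) : ℝ :=
  ∫ y in Ioi 0, y ^ m / (1 + a * y) ^ j * exp (-c * y)

noncomputable def logMoment (a c : ℝ) (m : ℕ) : ℝ :=
  ∫ y in Ioi 0, log (1 + a * y) * y ^ m * exp (-c * y)

theorem abs_pow_div_one_add_mul_pow_le (ha : 0 ≤ a) {y : ℝ} (hy : 0 ≤ y) (m j : ℕ) :
    |y ^ m / (1 + a * y) ^ j| ≤ y ^ m := by
  have h1 : 1 ≤ (1 + a * y) ^ j := one_le_pow₀ (by nlinarith)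
  rw [abs_of_nonneg (by positivity)]
  exact div_le_self (by positivity) h1

theorem abs_log_one_add_mul_mul_pow_le (ha : 0 ≤ a) {y : ℝ} (hy : 0 ≤ y) (m : ℕ) :
    |log (1 + a * y) * y ^ m| ≤ a * y ^ (m + 1) := by
  have hlog : 0 ≤ log (1 + a * y) := log_nonneg (by nlinarith)
  have hlog' : log (1 + a * y) ≤ a * y := by
    linarith [log_le_sub_one_of_pos (show 0 < 1 + a * y by nlinarith)]
  rw [abs_of_nonneg (by positivity)]
  calc log (1 + a * y) * y ^ m ≤ a * y * y ^ m := mul_le_mul_of_nonneg_right hlog' (by positivity)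
    _ = a * y ^ (m + 1) := by ring

theorem continuousOn_pow_div_one_add_mul_pow (ha : 0 ≤ a) (m j : ℕ) :
    ContinuousOn (fun y => y ^ m / (1 + a * y) ^ j) (Ioi 0) :=
  ContinuousOn.div (by fun_prop) (by fun_prop) fun y (hy : 0 < y) =>
    (show 0 < (1 + a * y) ^ j by positivity).ne'

theorem continuousOn_log_one_add_mul_mul_pow (ha : 0 ≤ a) (m : ℕ) :
    ContinuousOn (fun y => log (1 + a * y) * y ^ m) (Ioi 0) :=
  ContinuousOn.mul (ContinuousOn.log (by fun_prop) fun y (hy : 0 < y) =>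
    (show 0 < 1 + a * y by positivity).ne') (by fun_prop)

theorem integrableOn_pow_div_one_add_mul_pow_mul_exp (ha : 0 ≤ a) (hc : 0 < c) (m j : ℕ) :
    IntegrableOn (fun y => y ^ m / (1 + a * y) ^ j * exp (-c * y)) (Ioi 0) :=
  integrableOn_mul_exp_neg_mul_of_abs_le hc (continuousOn_pow_div_one_add_mul_pow ha m j)
    fun _ hy => (abs_pow_div_one_add_mul_pow_le ha (le_of_lt hy) m j).trans_eq (one_mul _).symm

theorem integrableOn_log_one_add_mul_mul_pow_mul_exp (ha : 0 ≤ a) (hc : 0 < c) (m : ℕ) :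
    IntegrableOn (fun y => log (1 + a * y) * y ^ m * exp (-c * y)) (Ioi 0) :=
  integrableOn_mul_exp_neg_mul_of_abs_le hc (continuousOn_log_one_add_mul_mul_pow ha m)
    fun _ hy => abs_log_one_add_mul_mul_pow_le ha (le_of_lt hy) m

theorem ratMoment_zero_right (hc : 0 < c) (m : ℕ) : ratMoment a c m 0 = m ! / c ^ (m + 1) := by
  simpa only [ratMoment, pow_zero, div_one] using integral_pow_mul_exp_neg_mul hc m

theorem mul_ratMoment_succ_succ (ha : 0 ≤ a) (hc : 0 < c) (m j : ℕ) :
    a * ratMoment a c (m + 1) (j + 1) = ratMoment a c m j - ratMoment a c m (j + 1) := by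
  rw [ratMoment, ratMoment, ratMoment, ← integral_const_mul,
    ← integral_sub (integrableOn_pow_div_one_add_mul_pow_mul_exp ha hc m j)
      (integrableOn_pow_div_one_add_mul_pow_mul_exp ha hc m (j + 1))]
  refine setIntegral_congr_fun measurableSet_Ioi fun y (hy : 0 < y) => ?_
  have : 0 < 1 + a * y := by positivity
  field_simp
  ring

theorem mul_ratMoment_succ_add_mul_ratMoment (ha : 0 ≤ a) (hc : 0 < c) (n : ℕ) :
    n * a * ratMoment a c 0 (n + 1) + c * ratMoment a c 0 n = 1 := by
  have hderiv : ∀ y ∈ Ici (0 : ℝ), HasDerivAt (fun y => ((1 + a * y) ^ n)⁻¹ * exp (-c * y))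
      (-(n * a * (y ^ 0 / (1 + a * y) ^ (n + 1) * exp (-c * y)))
        - c * (y ^ 0 / (1 + a * y) ^ n * exp (-c * y))) y := by
    intro y (hy : 0 ≤ y)
    refine ((hasDerivAt_inv_one_add_mul_pow (by positivity) n).mul
      (hasDerivAt_exp_neg_mul c y)).congr_deriv ?_
    ring
  have h₁ := (integrableOn_pow_div_one_add_mul_pow_mul_exp ha hc 0 (n + 1)).const_mul (n * a)
  have h₂ := (integrableOn_pow_div_one_add_mul_pow_mul_exp ha hc 0 n).const_mul c
  have hftc := integral_Ioi_of_hasDerivAt_of_tendsto' hderiv (h₁.neg.sub h₂)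
    (tendsto_mul_exp_neg_mul_of_abs_le (K := 1) (m := 0) hc fun y (hy : 0 < y) => by
      simpa using abs_pow_div_one_add_mul_pow_le ha hy.le 0 n)
  rw [integral_sub (by exact h₁.neg) h₂, integral_neg, integral_const_mul,
    integral_const_mul] at hftc
  simp only [mul_zero, add_zero, one_pow, inv_one, exp_zero, mul_one, zero_sub] at hftc
  unfold ratMoment
  linarith

-- At `m = 0` the truncated `m - 1` is harmless, as its coefficient vanishes.
theorem mul_logMoment (ha : 0 ≤ a) (hc : 0 < c) (m : ℕ) :
    c * logMoment a c m = m * logMoment a c (m - 1) + a * ratMoment a c m 1 := by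
  have hderiv : ∀ y ∈ Ici (0 : ℝ),
      HasDerivAt (fun y => log (1 + a * y) * y ^ m * exp (-c * y))
      (a * (y ^ m / (1 + a * y) ^ 1 * exp (-c * y))
        + m * (log (1 + a * y) * y ^ (m - 1) * exp (-c * y))
        - c * (log (1 + a * y) * y ^ m * exp (-c * y))) y := by
    intro y (hy : 0 ≤ y)
    refine (((hasDerivAt_log_one_add_mul (by positivity)).mul (hasDerivAt_pow m y)).mul
      (hasDerivAt_exp_neg_mul c y)).congr_deriv ?_
    simp only [Pi.mul_apply]
    ring
  have h₁ := (integrableOn_pow_div_one_add_mul_pow_mul_exp ha hc m 1).const_mul a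
  have h₂ := (integrableOn_log_one_add_mul_mul_pow_mul_exp ha hc (m - 1)).const_mul (m : ℝ)
  have h₃ := (integrableOn_log_one_add_mul_mul_pow_mul_exp ha hc m).const_mul c
  have hftc := integral_Ioi_of_hasDerivAt_of_tendsto' hderiv ((h₁.add h₂).sub h₃)
    (tendsto_mul_exp_neg_mul_of_abs_le hc fun y (hy : 0 < y) =>
      abs_log_one_add_mul_mul_pow_le ha hy.le m)
  rw [integral_sub (by exact h₁.add h₂) h₃, integral_add h₁ h₂, integral_const_mul,
    integral_const_mul, integral_const_mul] at hftc
  simp only [mul_zero, add_zero, log_one, zero_mul, sub_zero] at hftc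
  unfold logMoment ratMoment
  linarith

theorem pow_mul_ratMoment_one (ha : 0 < a) (hc : 0 < c) (n : ℕ) :
    c ^ n * ratMoment a c n 1 = n ! * ratMoment a c 0 (n + 1) := by
  induction n with
  | zero => simp
  | succ n ih =>
    have hsplit := mul_ratMoment_succ_succ ha.le hc n 0
    have hibp := mul_ratMoment_succ_add_mul_ratMoment ha.le hc (n + 1)
    rw [ratMoment_zero_right hc] at hsplit
    refine mul_left_cancel₀ ha.ne' ?_
    calc a * (c ^ (n + 1) * ratMoment a c (n + 1) 1)
        = c ^ (n + 1) * (a * ratMoment a c (n + 1) (0 + 1)) := by ring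
      _ = c ^ (n + 1) * (n ! / c ^ (n + 1)) - c * (c ^ n * ratMoment a c n 1) := by
          rw [hsplit]; ring
      _ = n ! * (1 - c * ratMoment a c 0 (n + 1)) := by
          rw [ih, mul_div_cancel₀ _ (pow_ne_zero _ hc.ne')]; ring
      _ = a * ((n + 1)! * ratMoment a c 0 (n + 1 + 1)) := by
          rw [← hibp, Nat.factorial_succ]; push_cast; ring

theorem logMoment_eq_sum (ha : 0 < a) (hc : 0 < c) (m : ℕ) :
    logMoment a c m
      = m ! * a / c ^ (m + 1) * ∑ i ∈ Finset.range (m + 1), ratMoment a c 0 (i + 1) := by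
  induction m with
  | zero =>
    have h := mul_logMoment ha.le hc 0
    simp only [CharP.cast_eq_zero, zero_mul, zero_add] at h
    simp only [Nat.factorial_zero, Nat.cast_one, one_mul, zero_add, pow_one, Finset.sum_range_one]
    field_simp
    linarith
  | succ m ih =>
    have hrec := mul_logMoment ha.le hc (m + 1)
    have hkey := pow_mul_ratMoment_one ha hc (m + 1)
    rw [Nat.add_sub_cancel, ih, ← mul_div_cancel_left₀ (ratMoment a c (m + 1) 1)
      (pow_ne_zero (m + 1) hc.ne'), hkey] at hrec
    refine mul_left_cancel₀ hc.ne' ?_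
    rw [hrec, Finset.sum_range_succ _ (m + 1), Nat.factorial_succ]
    push_cast
    field_simp
    ring

theorem integral_Ioi_div_rpow_neg_mul_exp_neg (ha : 0 < a) (hc : 0 < c) (j : ℕ) :
    ∫ t in Ioi (c / a), t ^ (-(j : ℝ)) * exp (-t)
      = c * (a / c) ^ j * exp (-(c / a)) * ratMoment a c 0 j := by
  have h := integral_Ioi_comp_add_mul (fun t => t ^ (-(j : ℝ)) * exp (-t)) (c / a) hc
  rw [inv_mul_eq_div, eq_div_iff hc.ne'] at h
  have hintegrand : ∀ y ∈ Ioi (0 : ℝ), (c / a + c * y) ^ (-(j : ℝ)) * exp (-(c / a + c * y))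
      = (a / c) ^ j * exp (-(c / a)) * (y ^ 0 / (1 + a * y) ^ j * exp (-c * y)) := by
    intro y (hy : 0 < y)
    rw [show c / a + c * y = c / a * (1 + a * y) by field_simp, mul_rpow (by positivity)
      (by positivity), rpow_neg (by positivity), rpow_natCast, rpow_neg (by positivity),
      rpow_natCast, show -(c / a * (1 + a * y)) = -(c / a) + -c * y by field_simp; ring, exp_add,
      ← inv_div, inv_pow]
    field_simp
  rw [← h, setIntegral_congr_fun measurableSet_Ioi hintegrand, integral_const_mul, ratMoment]
  ring

theorem exp_mul_div_mul_integral_Ioi_rpow_mul_exp_neg (ha : 0 < a) (hc : 0 < c)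
    {k n : ℕ} (hk : k ≤ n) :
    exp (c / a) * (1 / (c ^ k * a ^ (n - k))
        * ∫ t in Ioi (c / a), t ^ ((k : ℝ) - n - 1) * exp (-t))
      = a / c ^ n * ratMoment a c 0 (n - k + 1) := by
  obtain ⟨l, rfl⟩ := Nat.exists_eq_add_of_le hk
  rw [Nat.add_sub_cancel_left,
    show (k : ℝ) - (k + l : ℕ) - 1 = -((l + 1 : ℕ) : ℝ) by push_cast; ring,
    integral_Ioi_div_rpow_neg_mul_exp_neg ha hc, exp_neg, div_pow]
  field_simp
  ring

end Moments

/-- The integral identity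
`∫₀^∞ ln(1+ay) y^{n-1} e^{-cy} dy
  = (n-1)! e^{c/a} ∑_{k=1}^{n} Γ(-n+k, c/a) / (c^k a^{n-k})`,
with the upper incomplete gamma function written as an explicit integral. -/
theorem integral_log_mul_pow_mul_exp
    (n : ℕ) (hn : 1 ≤ n) (a c : ℝ) (ha : 0 < a) (hc : 0 < c) :
    ∫ y in Ioi (0 : ℝ), Real.log (1 + a * y) * y ^ (n - 1) * Real.exp (-c * y)
      = (Nat.factorial (n - 1) : ℝ) * Real.exp (c / a)
          * ∑ k ∈ Finset.Icc 1 n,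
              (1 / (c ^ k * a ^ (n - k)))
                * ∫ t in Ioi (c / a), t ^ ((k : ℝ) - n - 1) * Real.exp (-t) := by
  obtain ⟨m, rfl⟩ : ∃ m, n = m + 1 := ⟨n - 1, by omega⟩
  have hreflect : ∑ k ∈ Finset.Icc 1 (m + 1), ratMoment a c 0 (m + 1 - k + 1)
      = ∑ i ∈ Finset.range (m + 1), ratMoment a c 0 (i + 1) := by
    rw [← Finset.Ico_add_one_right_eq_Icc,
      Finset.sum_Ico_reflect (fun i => ratMoment a c 0 (i + 1)) 1 le_rfl, Nat.sub_self,
      Nat.add_sub_cancel, Finset.range_eq_Ico]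
  change logMoment a c (m + 1 - 1) = _
  rw [Nat.add_sub_cancel, logMoment_eq_sum ha hc, mul_assoc _ (exp _),
    Finset.mul_sum (Finset.Icc 1 (m + 1)), Finset.sum_congr rfl fun k hk =>
      exp_mul_div_mul_integral_Ioi_rpow_mul_exp_neg ha hc (Finset.mem_Icc.1 hk).2,
    ← Finset.mul_sum, hreflect]
  ring
end

section
/- Let $N_t \ge 1$ be an integer and $\lambda \ge 0$, $\delta_t \ge 0$, $\delta_r > 0$ be real numbers. Then, as $\rho \to \infty$, $\log_2\Big(1 + \dfrac{(\rho/N_t)\lambda}{(\rho\delta_t^2/N_t)\lambda + \rho\delta_r^2 + 1}\Big) \longrightarrow \log_2\Big(1 + \dfrac{\lambda}{\delta_t^2 \lambda + N_t \delta_r^2}\Big)$. -/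
/-!
Dividing numerator and denominator of the SINR by `ρ` leaves
`(λ/N_t) / (δt² λ/N_t + δr² + 1/ρ)`; the term `1/ρ` vanishes, and the limiting denominator is
positive because `δr > 0`, so the SINR converges and `log₂ (1 + ·)` is continuous at the limit.
-/

open Filter Topology

theorem tendsto_mul_div_mul_add_one_atTop (a b : ℝ) (hb : b ≠ 0) :
    Tendsto (fun ρ : ℝ => ρ * a / (ρ * b + 1)) atTop (𝓝 (a / b)) := by
  have hden : Tendsto (fun ρ : ℝ => b + ρ⁻¹) atTop (𝓝 b) := by
    simpa using tendsto_const_nhds.add (tendsto_inv_atTop_zero (𝕜 := ℝ))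
  refine ((tendsto_const_nhds (x := a)).div hden hb).congr' ?_
  filter_upwards [eventually_ne_atTop 0] with ρ hρ
  change a / (b + ρ⁻¹) = ρ * a / (ρ * b + 1)
  field_simp

theorem rate_tendsto_high_snr_limit_general
    (Nt : ℕ) (hNt : 1 ≤ Nt) (lam δt δr : ℝ)
    (hlam : 0 ≤ lam) (hδr : 0 < δr) :
    Tendsto
      (fun ρ : ℝ =>
        Real.logb 2
          (1 + (ρ / Nt * lam) / ((ρ * δt ^ 2 / Nt) * lam + ρ * δr ^ 2 + 1)))
      atTop
      (nhds (Real.logb 2 (1 + lam / (δt ^ 2 * lam + Nt * δr ^ 2)))) := by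
  have hNt_pos : (0 : ℝ) < Nt := by exact_mod_cast hNt
  have hden_pos : 0 < δt ^ 2 * lam / Nt + δr ^ 2 := by positivity
  have hsinr := tendsto_mul_div_mul_add_one_atTop (lam / Nt) _ hden_pos.ne'
  have hlimit : lam / Nt / (δt ^ 2 * lam / Nt + δr ^ 2) = lam / (δt ^ 2 * lam + Nt * δr ^ 2) := by
    field_simp
  rw [hlimit] at hsinr
  have hlimit_pos : 0 < 1 + lam / (δt ^ 2 * lam + Nt * δr ^ 2) := by positivity
  refine (tendsto_const_nhds.add (hsinr.congr fun ρ => ?_)).logb hlimit_pos.ne'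
  ring

/-- As `ρ → ∞`, the per-eigenvalue rate
`log₂(1 + (ρ/N_t)λ / ((ρ δt²/N_t)λ + ρ δr² + 1))` converges to
`log₂(1 + λ / (δt² λ + N_t δr²))`. -/
theorem rate_tendsto_high_snr_limit
    (Nt : ℕ) (hNt : 1 ≤ Nt) (lam δt δr : ℝ)
    (hlam : 0 ≤ lam) (hδt : 0 ≤ δt) (hδr : 0 < δr) :
    Tendsto
      (fun ρ : ℝ =>
        Real.logb 2
          (1 + (ρ / Nt * lam) / ((ρ * δt ^ 2 / Nt) * lam + ρ * δr ^ 2 + 1)))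
      atTop
      (nhds (Real.logb 2 (1 + lam / (δt ^ 2 * lam + Nt * δr ^ 2)))) :=
  rate_tendsto_high_snr_limit_general Nt hNt lam δt δr hlam hδr
end

section
/- Let $(\Omega, \mathcal{F}, \mathbb{P})$ be a probability space, $N_t \ge 1$ an integer, $\delta_t \ge 0$, $\delta_r > 0$ real numbers, and $\Lambda : \Omega \to [0,\infty)$ a measurable random variable such that $\omega \mapsto \log_2\big(1 + \Lambda(\omega)/(\delta_t^2 \Lambda(\omega) + N_t \delta_r^2)\big)$ is integrable. Then $\lim_{\rho \to \infty} \mathbb{E}\Big[\log_2\Big(1 + \dfrac{(\rho/N_t)\Lambda}{(\rho\delta_t^2/N_t)\Lambda + \rho\delta_r^2 + 1}\Big)\Big] = \mathbb{E}\Big[\log_2\Big(1 + \dfrac{\Lambda}{\delta_t^2 \Lambda + N_t \delta_r^2}\Big)\Big]$. -/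
open Filter MeasureTheory

/-- Dominated-convergence step for the high-SNR capacity ceiling: if the limit
rate `log₂(1 + Λ/(δt² Λ + N_t δr²))` is integrable, then the expected rate at
SNR `ρ` converges, as `ρ → ∞`, to the expectation of the limit rate. -/
theorem expected_rate_tendsto_high_snr_limit
    {Ω : Type*} [MeasureSpace Ω] [IsProbabilityMeasure (volume : Measure Ω)]
    (Nt : ℕ) (hNt : 1 ≤ Nt) (δt δr : ℝ) (hδt : 0 ≤ δt) (hδr : 0 < δr)
    (Λ : Ω → ℝ) (hΛmeas : Measurable Λ) (hΛnonneg : ∀ ω, 0 ≤ Λ ω)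
    (hint : Integrable
      (fun ω => Real.logb 2 (1 + Λ ω / (δt ^ 2 * Λ ω + Nt * δr ^ 2)))) :
    Tendsto
      (fun ρ : ℝ =>
        ∫ ω, Real.logb 2
          (1 + (ρ / Nt * Λ ω) / ((ρ * δt ^ 2 / Nt) * Λ ω + ρ * δr ^ 2 + 1)))
      atTop
      (nhds (∫ ω, Real.logb 2 (1 + Λ ω / (δt ^ 2 * Λ ω + Nt * δr ^ 2)))) := by
  have hNt' : (0:ℝ) < Nt := by exact_mod_cast hNt
  have hD : ∀ ω, 0 < δt ^ 2 * Λ ω + Nt * δr ^ 2 := fun ω => by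
    have := hΛnonneg ω; positivity
  have key : ∀ ρ : ℝ, 0 < ρ → ∀ ω : Ω,
      (ρ / Nt * Λ ω) / ((ρ * δt ^ 2 / Nt) * Λ ω + ρ * δr ^ 2 + 1)
        = Λ ω / (δt ^ 2 * Λ ω + Nt * δr ^ 2 + Nt / ρ) := by
    intro ρ hρ ω
    have hΛ := hΛnonneg ω
    have hden1 : (ρ * δt ^ 2 / Nt) * Λ ω + ρ * δr ^ 2 + 1 ≠ 0 := by positivity
    have hden2 : δt ^ 2 * Λ ω + Nt * δr ^ 2 + Nt / ρ ≠ 0 := by positivity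
    field_simp
  apply tendsto_integral_filter_of_dominated_convergence
    (fun ω => Real.logb 2 (1 + Λ ω / (δt ^ 2 * Λ ω + Nt * δr ^ 2)))
  · refine Eventually.of_forall fun ρ => ?_
    apply Measurable.aestronglyMeasurable
    simp only [Real.logb]
    apply Measurable.div _ measurable_const
    apply Real.measurable_log.comp
    apply Measurable.add measurable_const
    exact ((measurable_const.mul hΛmeas).div
      (((measurable_const.mul hΛmeas).add measurable_const).add measurable_const))
  · filter_upwards [eventually_gt_atTop (0:ℝ)] with ρ hρ
    refine Eventually.of_forall fun ω => ?_
    have hΛ := hΛnonneg ω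
    rw [key ρ hρ ω]
    have h1 : 0 ≤ Λ ω / (δt ^ 2 * Λ ω + Nt * δr ^ 2 + Nt / ρ) := by positivity
    rw [Real.norm_eq_abs,
      abs_of_nonneg (Real.logb_nonneg one_lt_two (by linarith))]
    have hle : Λ ω / (δt ^ 2 * Λ ω + Nt * δr ^ 2 + Nt / ρ)
        ≤ Λ ω / (δt ^ 2 * Λ ω + Nt * δr ^ 2) := by
      apply div_le_div_of_nonneg_left hΛ (hD ω)
      have : 0 < (Nt:ℝ) / ρ := by positivity
      linarith
    exact Real.logb_le_logb_of_le one_lt_two (by linarith) (by linarith)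
  · exact hint
  · refine Eventually.of_forall fun ω => ?_
    have hΛ := hΛnonneg ω
    have hd : Tendsto (fun ρ : ℝ => δt ^ 2 * Λ ω + Nt * δr ^ 2 + Nt / ρ) atTop
        (nhds (δt ^ 2 * Λ ω + Nt * δr ^ 2 + 0)) :=
      tendsto_const_nhds.add ((tendsto_const_nhds (x := (Nt:ℝ))).div_atTop tendsto_id)
    rw [add_zero] at hd
    have hinner : Tendsto
        (fun ρ : ℝ => 1 + Λ ω / (δt ^ 2 * Λ ω + Nt * δr ^ 2 + Nt / ρ)) atTop
        (nhds (1 + Λ ω / (δt ^ 2 * Λ ω + Nt * δr ^ 2))) :=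
      tendsto_const_nhds.add (tendsto_const_nhds.div hd (ne_of_gt (hD ω)))
    have hpos : (0:ℝ) < 1 + Λ ω / (δt ^ 2 * Λ ω + Nt * δr ^ 2) := by positivity
    have hcont : ContinuousAt (Real.logb 2)
        (1 + Λ ω / (δt ^ 2 * Λ ω + Nt * δr ^ 2)) :=
      Real.continuousAt_logb (ne_of_gt hpos)
    have := hcont.tendsto.comp hinner
    apply this.congr'
    filter_upwards [eventually_gt_atTop (0:ℝ)] with ρ hρ
    simp only [Function.comp]
    rw [key ρ hρ ω]
end

section
/- Let $N_t \ge 1$, $N_r \ge 1$ be integers, let $H$ be an $N_r \times N_t$ complex matrix, and let $\delta_t \ge 0$, $\delta_r > 0$ be real numbers. With $\Phi(\rho) = (\rho \delta_t^2/N_t) H H^H + (\rho \delta_r^2 + 1) I_{N_r}$, the function $\rho \mapsto \log_2 \det\big(I_{N_r} + (\rho/N_t) H H^H \Phi(\rho)^{-1}\big)$ (whose determinant is a positive real number for every $\rho \ge 0$) converges, as $\rho \to \infty$, to the finite limit $\log_2 \det\big(I_{N_r} + H H^H (\delta_t^2 H H^H + N_t \delta_r^2 I_{N_r})^{-1}\big)$.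 -/
/-!
For `ρ > 0` the factor `ρ / N_t` cancels between `(ρ / N_t) H Hᴴ` and `Φ(ρ)`, so the capacity is
`log₂ det (I + A (δt² A + b I)⁻¹)` with `A = H Hᴴ` and `b = N_t δr² + N_t / ρ`. Diagonalising the
positive semidefinite `A`, with eigenvalues `λᵢ ≥ 0`, this determinant is
`∏ᵢ ((δt² + 1) λᵢ + b) / (δt² λᵢ + b)`: positive, and continuous in `b > 0`.
As `ρ → ∞`, `b → N_t δr² > 0`.
-/

open Matrix Filter Topology Set
open scoped ComplexOrder

theorem Matrix.smul_mul_inv_smul {n K : Type*} [Fintype n] [DecidableEq n] [Field K]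
    (B M : Matrix n n K) {t : K} (ht : t ≠ 0) : (t • B) * (t • M)⁻¹ = B * M⁻¹ := by
  by_cases hM : IsUnit M.det
  · rw [show t • M = Units.mk0 t ht • M from rfl, inv_smul' M _ hM, Units.smul_def,
      Units.val_inv_eq_inv_val, Units.val_mk0, Matrix.mul_smul, Matrix.smul_mul, smul_smul,
      inv_mul_cancel₀ ht, one_smul]
  · -- both inverses are then the junk value `0`
    have htM : ¬IsUnit (t • M).det := by
      rwa [det_smul, IsUnit.mul_iff, not_and_or, or_iff_right (by simpa using pow_ne_zero _ ht)]
    rw [nonsing_inv_apply_not_isUnit _ hM, nonsing_inv_apply_not_isUnit _ htM, mul_zero, mul_zero]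

namespace Matrix.IsHermitian

variable {n : Type*} [Fintype n] [DecidableEq n] {A : Matrix n n ℂ}

theorem det_smul_add_smul_one (hA : A.IsHermitian) (c d : ℂ) :
    (c • A + d • 1).det = ∏ i, (c * hA.eigenvalues i + d) := by
  set U : Matrix n n ℂ := (hA.eigenvectorUnitary : Matrix n n ℂ)
  have hU : U * star U = 1 := mem_unitaryGroup_iff.mp hA.eigenvectorUnitary.2
  have hdiag : c • A + d • 1 = U * diagonal (fun i => c * hA.eigenvalues i + d) * star U := by
    have : diagonal (fun i => c * hA.eigenvalues i + d)
        = c • diagonal (RCLike.ofReal ∘ hA.eigenvalues) + d • 1 := by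
      ext i j
      rcases eq_or_ne i j with rfl | h
      · simp
      · simp [diagonal_apply_ne _ h, one_apply_ne h]
    rw [this, Matrix.mul_add, Matrix.add_mul, Matrix.mul_smul, Matrix.smul_mul,
      Matrix.mul_smul, Matrix.smul_mul, mul_one, hU]
    conv_lhs => rw [hA.spectral_theorem, Unitary.conjStarAlgAut_apply]
  rw [hdiag, det_mul_right_comm, hU, one_mul, det_diagonal]

theorem det_one_add_mul_inv_smul_add_smul_one (hA : A.IsHermitian) {a b : ℝ}
    (h : ∀ i, a * hA.eigenvalues i + b ≠ 0) :
    (1 + A * ((a : ℂ) • A + (b : ℂ) • 1)⁻¹).det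
      = ((∏ i, ((a + 1) * hA.eigenvalues i + b) / (a * hA.eigenvalues i + b) : ℝ) : ℂ) := by
  set Φ : Matrix n n ℂ := (a : ℂ) • A + (b : ℂ) • 1
  have hΦ : Φ.det = ((∏ i, (a * hA.eigenvalues i + b) : ℝ) : ℂ) := by
    rw [hA.det_smul_add_smul_one]; push_cast; rfl
  have hΦA : (Φ + A).det = ((∏ i, ((a + 1) * hA.eigenvalues i + b) : ℝ) : ℂ) := by
    rw [show Φ + A = ((a + 1 : ℝ) : ℂ) • A + (b : ℂ) • 1 by
      push_cast; rw [add_smul, one_smul, add_right_comm], hA.det_smul_add_smul_one]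
    push_cast; rfl
  have hΦunit : IsUnit Φ.det := by
    rw [hΦ, isUnit_iff_ne_zero]
    exact_mod_cast Finset.prod_ne_zero_iff.mpr fun i _ => h i
  rw [show 1 + A * Φ⁻¹ = (Φ + A) * Φ⁻¹ by rw [Matrix.add_mul, mul_nonsing_inv _ hΦunit],
    det_mul, det_nonsing_inv, Ring.inverse_eq_inv', hΦA, hΦ, Finset.prod_div_distrib]
  push_cast
  rfl

end Matrix.IsHermitian

namespace Matrix.PosSemidef

variable {n : Type*} [Fintype n] [DecidableEq n] {A : Matrix n n ℂ}

theorem mul_eigenvalues_add_pos (hA : A.PosSemidef) {a b : ℝ} (ha : 0 ≤ a) (hb : 0 < b)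
    (i : n) : 0 < a * hA.isHermitian.eigenvalues i + b :=
  add_pos_of_nonneg_of_pos (mul_nonneg ha (hA.eigenvalues_nonneg i)) hb

theorem det_one_add_mul_inv_smul_add_smul_one (hA : A.PosSemidef) {a b : ℝ} (ha : 0 ≤ a)
    (hb : 0 < b) :
    (1 + A * ((a : ℂ) • A + (b : ℂ) • 1)⁻¹).det
      = ((∏ i, ((a + 1) * hA.isHermitian.eigenvalues i + b)
          / (a * hA.isHermitian.eigenvalues i + b) : ℝ) : ℂ) :=
  hA.isHermitian.det_one_add_mul_inv_smul_add_smul_one fun i =>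
    (hA.mul_eigenvalues_add_pos ha hb i).ne'

theorem det_one_add_mul_inv_smul_add_smul_one_im_eq_zero_and_re_pos (hA : A.PosSemidef) {a b : ℝ}
    (ha : 0 ≤ a) (hb : 0 < b) :
    (1 + A * ((a : ℂ) • A + (b : ℂ) • 1)⁻¹).det.im = 0
      ∧ 0 < (1 + A * ((a : ℂ) • A + (b : ℂ) • 1)⁻¹).det.re := by
  rw [hA.det_one_add_mul_inv_smul_add_smul_one ha hb, Complex.ofReal_im, Complex.ofReal_re]
  exact ⟨rfl, Finset.prod_pos fun i _ => div_pos
    (hA.mul_eigenvalues_add_pos (by linarith) hb i) (hA.mul_eigenvalues_add_pos ha hb i)⟩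

theorem continuousOn_re_det_one_add_mul_inv_smul_add_smul_one (hA : A.PosSemidef) {a : ℝ}
    (ha : 0 ≤ a) :
    ContinuousOn (fun s : ℝ => (1 + A * ((a : ℂ) • A + (s : ℂ) • 1)⁻¹).det.re) (Ioi 0) := by
  refine ContinuousOn.congr (f := fun s : ℝ => ∏ i, ((a + 1) * hA.isHermitian.eigenvalues i + s)
      / (a * hA.isHermitian.eigenvalues i + s)) ?_ fun s hs => ?_
  · exact continuousOn_finsetProd _ fun i _ => ContinuousOn.div (by fun_prop) (by fun_prop)
      fun s hs => (hA.mul_eigenvalues_add_pos ha hs i).ne'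
  · rw [hA.det_one_add_mul_inv_smul_add_smul_one ha hs, Complex.ofReal_re]

end Matrix.PosSemidef

theorem capacity_per_realization_tendsto_ceiling_general
    (Nt Nr : ℕ) (hNt : 1 ≤ Nt)
    (H : Matrix (Fin Nr) (Fin Nt) ℂ)
    (δt δr : ℝ) (hδr : 0 < δr) :
    (∀ ρ : ℝ, 0 ≤ ρ →
        (((1 : Matrix (Fin Nr) (Fin Nr) ℂ)
            + ((ρ / Nt : ℝ) : ℂ) • (H * Hᴴ)
              * (((ρ * δt ^ 2 / Nt : ℝ) : ℂ) • (H * Hᴴ)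
                  + ((ρ * δr ^ 2 + 1 : ℝ) : ℂ)
                      • (1 : Matrix (Fin Nr) (Fin Nr) ℂ))⁻¹).det.im = 0
          ∧ 0 < ((1 : Matrix (Fin Nr) (Fin Nr) ℂ)
            + ((ρ / Nt : ℝ) : ℂ) • (H * Hᴴ)
              * (((ρ * δt ^ 2 / Nt : ℝ) : ℂ) • (H * Hᴴ)
                  + ((ρ * δr ^ 2 + 1 : ℝ) : ℂ)
                      • (1 : Matrix (Fin Nr) (Fin Nr) ℂ))⁻¹).det.re)) ∧
      Tendsto
        (fun ρ : ℝ =>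
          Real.logb 2
            (((1 : Matrix (Fin Nr) (Fin Nr) ℂ)
                + ((ρ / Nt : ℝ) : ℂ) • (H * Hᴴ)
                  * (((ρ * δt ^ 2 / Nt : ℝ) : ℂ) • (H * Hᴴ)
                      + ((ρ * δr ^ 2 + 1 : ℝ) : ℂ)
                          • (1 : Matrix (Fin Nr) (Fin Nr) ℂ))⁻¹).det.re))
        atTop
        (nhds (Real.logb 2
          (((1 : Matrix (Fin Nr) (Fin Nr) ℂ)
              + (H * Hᴴ)
                * (((δt ^ 2 : ℝ) : ℂ) • (H * Hᴴ)
                    + ((Nt * δr ^ 2 : ℝ) : ℂ)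
                        • (1 : Matrix (Fin Nr) (Fin Nr) ℂ))⁻¹).det.re))) := by
  have hNt0 : (0 : ℝ) < Nt := by exact_mod_cast hNt
  have hA := posSemidef_self_mul_conjTranspose H
  have hscale : ∀ ρ : ℝ, 0 < ρ →
      ((ρ / Nt : ℝ) : ℂ) • (H * Hᴴ)
          * (((ρ * δt ^ 2 / Nt : ℝ) : ℂ) • (H * Hᴴ) + ((ρ * δr ^ 2 + 1 : ℝ) : ℂ) • 1)⁻¹
        = H * Hᴴ
          * (((δt ^ 2 : ℝ) : ℂ) • (H * Hᴴ) + ((Nt * δr ^ 2 + Nt / ρ : ℝ) : ℂ) • 1)⁻¹ := by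
    intro ρ hρ
    refine Eq.trans ?_ (smul_mul_inv_smul _ _ (Complex.ofReal_ne_zero.mpr (div_pos hρ hNt0).ne'))
    rw [smul_add, smul_smul, smul_smul, ← Complex.ofReal_mul, ← Complex.ofReal_mul]
    congr 5 <;> field_simp
  refine ⟨fun ρ hρ => ?_, ?_⟩
  · rcases hρ.eq_or_lt with rfl | hρ
    · simp
    · rw [hscale ρ hρ]
      exact hA.det_one_add_mul_inv_smul_add_smul_one_im_eq_zero_and_re_pos (sq_nonneg δt)
        (by positivity)
  · have hs : Tendsto (fun ρ : ℝ => Nt * δr ^ 2 + Nt / ρ) atTop (𝓝 (Nt * δr ^ 2)) := by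
      simpa using (tendsto_const_nhds (x := (Nt * δr ^ 2 : ℝ))).add
        (tendsto_const_nhds.div_atTop tendsto_id)
    have hs₀ : (0 : ℝ) < Nt * δr ^ 2 := by positivity
    have hdet := ((hA.continuousOn_re_det_one_add_mul_inv_smul_add_smul_one
      (sq_nonneg δt)).continuousAt (Ioi_mem_nhds hs₀)).tendsto.comp hs
    have hpos :=
      hA.det_one_add_mul_inv_smul_add_smul_one_im_eq_zero_and_re_pos (sq_nonneg δt) hs₀
    refine ((Real.continuousAt_logb hpos.2.ne').tendsto.comp hdet).congr' ?_
    filter_upwards [eventually_gt_atTop 0] with ρ hρ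
    rw [Function.comp_apply, Function.comp_apply, hscale ρ hρ]

/-- Per-channel-realization high-SNR capacity ceiling: with
`Φ(ρ) = (ρ δt²/N_t) H Hᴴ + (ρ δr² + 1) I`, the determinant
`det(I + (ρ/N_t) H Hᴴ Φ(ρ)⁻¹)` is a positive real number for every `ρ ≥ 0`,
and `log₂` of it converges, as `ρ → ∞`, to the finite limit
`log₂ det(I + H Hᴴ (δt² H Hᴴ + N_t δr² I)⁻¹)`. -/
theorem capacity_per_realization_tendsto_ceiling
    (Nt Nr : ℕ) (hNt : 1 ≤ Nt) (hNr : 1 ≤ Nr)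
    (H : Matrix (Fin Nr) (Fin Nt) ℂ)
    (δt δr : ℝ) (hδt : 0 ≤ δt) (hδr : 0 < δr) :
    (∀ ρ : ℝ, 0 ≤ ρ →
        (((1 : Matrix (Fin Nr) (Fin Nr) ℂ)
            + ((ρ / Nt : ℝ) : ℂ) • (H * Hᴴ)
              * (((ρ * δt ^ 2 / Nt : ℝ) : ℂ) • (H * Hᴴ)
                  + ((ρ * δr ^ 2 + 1 : ℝ) : ℂ)
                      • (1 : Matrix (Fin Nr) (Fin Nr) ℂ))⁻¹).det.im = 0
          ∧ 0 < ((1 : Matrix (Fin Nr) (Fin Nr) ℂ)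
            + ((ρ / Nt : ℝ) : ℂ) • (H * Hᴴ)
              * (((ρ * δt ^ 2 / Nt : ℝ) : ℂ) • (H * Hᴴ)
                  + ((ρ * δr ^ 2 + 1 : ℝ) : ℂ)
                      • (1 : Matrix (Fin Nr) (Fin Nr) ℂ))⁻¹).det.re)) ∧
      Tendsto
        (fun ρ : ℝ =>
          Real.logb 2
            (((1 : Matrix (Fin Nr) (Fin Nr) ℂ)
                + ((ρ / Nt : ℝ) : ℂ) • (H * Hᴴ)
                  * (((ρ * δt ^ 2 / Nt : ℝ) : ℂ) • (H * Hᴴ)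
                      + ((ρ * δr ^ 2 + 1 : ℝ) : ℂ)
                          • (1 : Matrix (Fin Nr) (Fin Nr) ℂ))⁻¹).det.re))
        atTop
        (nhds (Real.logb 2
          (((1 : Matrix (Fin Nr) (Fin Nr) ℂ)
              + (H * Hᴴ)
                * (((δt ^ 2 : ℝ) : ℂ) • (H * Hᴴ)
                    + ((Nt * δr ^ 2 : ℝ) : ℂ)
                        • (1 : Matrix (Fin Nr) (Fin Nr) ℂ))⁻¹).det.re))) :=
  capacity_per_realization_tendsto_ceiling_general Nt Nr hNt H δt δr hδr
end

section
/- Let $N_t, N_r \ge 1$ be integers with $q = \min(N_t,N_r)$, and $\delta_t \ge 0$, $\delta_r \ge 0$ reals. Let $\Lambda$ be a nonnegative real random variable with $q\,\mathbb{E}[\Lambda] = N_r N_t$ and $\mathbb{E}[\Lambda^2] < \infty$, and define $C(\rho) = q\,\mathbb{E}\big[\log_2\big(1 + \frac{(\rho/N_t)\Lambda}{(\rho\delta_t^2/N_t)\Lambda + \rho\delta_r^2 + 1}\big)\big]$ for $\rho \ge 0$. Then $C$ is differentiable at $\rho = 0$ with $C'(0) = N_r/\ln 2$; consequently the minimum energy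 per information bit $\frac{E_b}{N_0}_{\min} = \lim_{\rho \to 0^+} \rho / C(\rho) = 1/C'(0)$ equals $\ln 2 / N_r$, independently of the impairment levels $\delta_t, \delta_r$. -/
/-!
To first order in `ρ`, `log(1 + SINR(ρ, λ)) = ρ λ / N_t`: the impairments only enter the
denominator of the SINR as `1 + O(ρ)`. Precisely, the error is at most `ρ² K(λ)` with `K` a
quadratic polynomial, so `E[Λ²] < ∞` makes `C(ρ) - ρ q E[Λ] / (N_t ln 2) = O(ρ²)` for `ρ ≥ 0`.
With `q E[Λ] = N_r N_t` this gives `C(0) = 0` and `C'(0) = N_r / ln 2`, and `ρ / C(ρ)` tends to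
the reciprocal of the derivative.
-/

open MeasureTheory Set Filter Topology Asymptotics

namespace Real

lemma abs_log_one_add_sub_le_sq {x : ℝ} (hx : 0 ≤ x) : |log (1 + x) - x| ≤ x ^ 2 := by
  have hx1 : 0 < 1 + x := by linarith
  have hupper : log (1 + x) ≤ x := by linarith [log_le_sub_one_of_pos hx1]
  have hlower : x / (1 + x) ≤ log (1 + x) := by
    have h := one_sub_inv_le_log_of_pos hx1
    rwa [show 1 - (1 + x)⁻¹ = x / (1 + x) by field_simp; ring] at h
  have hsq : x - x ^ 2 ≤ x / (1 + x) := by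
    rw [le_div_iff₀ hx1]; nlinarith [pow_nonneg hx 3]
  rw [abs_le]; constructor <;> linarith

lemma abs_log_one_add_div_sub_le {a D : ℝ} (ha : 0 ≤ a) (hD : 1 ≤ D) :
    |log (1 + a / D) - a| ≤ a * (D - 1) + a ^ 2 := by
  have hD0 : 0 < D := by linarith
  have hquot : |a / D - a| ≤ a * (D - 1) := by
    rw [show a / D - a = -(a * (D - 1) / D) by field_simp; ring, abs_neg,
      abs_of_nonneg (by positivity)]
    exact div_le_self (by nlinarith) hD
  have hsq : (a / D) ^ 2 ≤ a ^ 2 :=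
    pow_le_pow_left₀ (by positivity) (div_le_self ha hD) 2
  calc |log (1 + a / D) - a| ≤ |log (1 + a / D) - a / D| + |a / D - a| := abs_sub_le _ _ _
    _ ≤ (a / D) ^ 2 + a * (D - 1) := add_le_add (abs_log_one_add_sub_le_sq (by positivity)) hquot
    _ ≤ a * (D - 1) + a ^ 2 := by linarith

end Real

/-- `SINR(ρ, x)` with `n = N_t`, `b = δ_t²`, `c = δ_r²`. -/
noncomputable def sinr (n b c ρ x : ℝ) : ℝ :=
  (ρ / n * x) / ((ρ * b / n) * x + ρ * c + 1)

lemma abs_log_one_add_sinr_sub_le {n b c ρ x : ℝ} (hn : 0 ≤ n) (hb : 0 ≤ b) (hc : 0 ≤ c)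
    (hρ : 0 ≤ ρ) (hx : 0 ≤ x) :
    |Real.log (1 + sinr n b c ρ x) - ρ * x / n| ≤
      ρ ^ 2 * (x * (b * x / n + c) / n + (x / n) ^ 2) := by
  have hsinr : sinr n b c ρ x = (ρ * x / n) / (1 + ρ * (b * x / n + c)) := by
    unfold sinr; congr 1 <;> ring
  have h := Real.abs_log_one_add_div_sub_le (a := ρ * x / n) (D := 1 + ρ * (b * x / n + c))
    (by positivity) (le_add_of_nonneg_right (by positivity))
  rw [hsinr]
  convert h using 1
  ring

section Integral

variable {α : Type*} [MeasurableSpace α] {μ : Measure α}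

lemma abs_integral_sub_le_of_abs_sub_le {f g h : α → ℝ} (hf : AEStronglyMeasurable f μ)
    (hg : Integrable g μ) (hh : Integrable h μ) (hfg : ∀ ω, |f ω - g ω| ≤ h ω) :
    |∫ ω, f ω ∂μ - ∫ ω, g ω ∂μ| ≤ ∫ ω, h ω ∂μ := by
  have hdiff : Integrable (fun ω => f ω - g ω) μ :=
    hh.mono' (hf.sub hg.aestronglyMeasurable) (Eventually.of_forall hfg)
  have hf_int : Integrable f μ := by
    simpa only [Pi.add_def, sub_add_cancel] using hdiff.add hg
  rw [← integral_sub hf_int hg]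
  exact abs_integral_le_integral_abs.trans (integral_mono hdiff.abs hh hfg)

lemma exists_abs_integral_log_one_add_sinr_sub_le [IsFiniteMeasure μ] {X : α → ℝ}
    (hX : Measurable X) (hX0 : ∀ ω, 0 ≤ X ω) (hX2 : Integrable (fun ω => X ω ^ 2) μ)
    {n b c : ℝ} (hn : 0 < n) (hb : 0 ≤ b) (hc : 0 ≤ c) :
    ∃ B, ∀ ρ, 0 ≤ ρ →
      |(∫ ω, Real.log (1 + sinr n b c ρ (X ω)) ∂μ) - ρ * (∫ ω, X ω ∂μ) / n| ≤ B * ρ ^ 2 := by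
  have hX1 : Integrable X μ :=
    ((memLp_two_iff_integrable_sq hX.aestronglyMeasurable).2 hX2).integrable one_le_two
  refine ⟨∫ ω, X ω * (b * X ω / n + c) / n + (X ω / n) ^ 2 ∂μ, fun ρ hρ => ?_⟩
  have hK : Integrable (fun ω => X ω * (b * X ω / n + c) / n + (X ω / n) ^ 2) μ := by
    have hpoly : (fun ω => X ω * (b * X ω / n + c) / n + (X ω / n) ^ 2)
        = fun ω => (b / n ^ 2 + 1 / n ^ 2) * X ω ^ 2 + c / n * X ω := by
      funext ω; field_simp; ring
    rw [hpoly]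
    exact (hX2.const_mul _).add (hX1.const_mul _)
  have hlog : AEStronglyMeasurable (fun ω => Real.log (1 + sinr n b c ρ (X ω))) μ :=
    (Real.measurable_log.comp (by unfold sinr; fun_prop)).aestronglyMeasurable
  rw [← integral_const_mul, ← integral_div, mul_comm, ← integral_const_mul]
  exact abs_integral_sub_le_of_abs_sub_le hlog ((hX1.const_mul ρ).div_const n)
    (hK.const_mul _) fun ω => abs_log_one_add_sinr_sub_le hn.le hb hc hρ (hX0 ω)

end Integral

lemma hasDerivWithinAt_Ici_of_abs_sub_le_sq {f : ℝ → ℝ} {L B : ℝ}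
    (h : ∀ ρ, 0 ≤ ρ → |f ρ - ρ * L| ≤ B * ρ ^ 2) : HasDerivWithinAt f L (Ici 0) 0 := by
  have hf0 : f 0 = 0 := by simpa using h 0 le_rfl
  rw [hasDerivWithinAt_iff_isLittleO]
  have hbig : (fun ρ => f ρ - f 0 - (ρ - 0) • L) =O[𝓝[Ici 0] 0] fun ρ : ℝ => ρ ^ 2 := by
    refine IsBigO.of_bound B ?_
    filter_upwards [self_mem_nhdsWithin] with ρ hρ
    simpa [hf0, abs_of_nonneg (sq_nonneg ρ)] using h ρ hρ
  simpa using hbig.trans_isLittleO ((isLittleO_pow_id one_lt_two).mono nhdsWithin_le_nhds)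

lemma tendsto_div_nhdsGT_of_hasDerivWithinAt_Ici {f : ℝ → ℝ} {L : ℝ}
    (hf : HasDerivWithinAt f L (Ici 0) 0) (hf0 : f 0 = 0) (hL : L ≠ 0) :
    Tendsto (fun ρ => ρ / f ρ) (𝓝[>] 0) (𝓝 L⁻¹) := by
  have hslope : Tendsto (slope f 0) (𝓝[>] 0) (𝓝 L) :=
    (hasDerivWithinAt_iff_tendsto_slope' (lt_irrefl (0 : ℝ))).1 (hf.mono Ioi_subset_Ici_self)
  convert hslope.inv₀ hL using 2 with ρ
  simp [slope_def_field, hf0]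

theorem min_energy_per_bit_general
    {Ω : Type*} [MeasureSpace Ω] [IsProbabilityMeasure (volume : Measure Ω)]
    (Nt Nr : ℕ) (hNt : 1 ≤ Nt) (hNr : 1 ≤ Nr)
    (q : ℕ)
    (δt δr : ℝ)
    (Λ : Ω → ℝ) (hΛmeas : Measurable Λ) (hΛnonneg : ∀ ω, 0 ≤ Λ ω)
    (hΛsq : Integrable (fun ω => Λ ω ^ 2))
    (hmom1 : (q : ℝ) * ∫ ω, Λ ω = Nr * Nt)
    (C : ℝ → ℝ)
    (hC : ∀ ρ : ℝ, C ρ = q * ∫ ω, Real.logb 2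
        (1 + (ρ / Nt * Λ ω) / ((ρ * δt ^ 2 / Nt) * Λ ω + ρ * δr ^ 2 + 1))) :
    HasDerivWithinAt C ((Nr : ℝ) / Real.log 2) (Ici 0) 0 ∧
      Tendsto (fun ρ : ℝ => ρ / C ρ) (nhdsWithin 0 (Ioi 0))
        (nhds (Real.log 2 / Nr)) := by
  have hNt0 : (0 : ℝ) < Nt := by exact_mod_cast hNt
  have hNr0 : (0 : ℝ) < Nr := by exact_mod_cast hNr
  obtain ⟨B, hB⟩ := exists_abs_integral_log_one_add_sinr_sub_le hΛmeas hΛnonneg hΛsq hNt0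
    (sq_nonneg δt) (sq_nonneg δr)
  have hCρ : ∀ ρ, C ρ - ρ * (Nr / Real.log 2) = q / Real.log 2 *
      ((∫ ω, Real.log (1 + sinr Nt (δt ^ 2) (δr ^ 2) ρ (Λ ω))) - ρ * (∫ ω, Λ ω) / Nt) := by
    intro ρ
    have hNr : (Nr : ℝ) = q * (∫ ω, Λ ω) / Nt := by field_simp; linarith
    have hCsinr : C ρ = q * ∫ ω, Real.logb 2 (1 + sinr Nt (δt ^ 2) (δr ^ 2) ρ (Λ ω)) := hC ρ
    simp only [hCsinr, Real.logb, integral_div, hNr]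
    ring
  have hderiv : HasDerivWithinAt C (Nr / Real.log 2) (Ici 0) 0 := by
    refine hasDerivWithinAt_Ici_of_abs_sub_le_sq (B := q / Real.log 2 * B) fun ρ hρ => ?_
    rw [hCρ, abs_mul, abs_of_nonneg (by positivity), mul_assoc]
    exact mul_le_mul_of_nonneg_left (hB ρ hρ) (by positivity)
  refine ⟨hderiv, ?_⟩
  rw [← inv_div]
  exact tendsto_div_nhdsGT_of_hasDerivWithinAt_Ici hderiv (by simp [hC]) (by positivity)

/-- Low-SNR analysis: with `C(ρ) = q E[log₂(1 + SINR(ρ,Λ))]`,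
`q E[Λ] = N_r N_t` and `E[Λ²] < ∞`, the capacity is differentiable at `ρ = 0`
(from the right) with `C'(0) = N_r / ln 2`; consequently the minimum energy per
information bit `lim_{ρ→0⁺} ρ / C(ρ)` equals `ln 2 / N_r`, independently of the
impairment levels. -/
theorem min_energy_per_bit
    {Ω : Type*} [MeasureSpace Ω] [IsProbabilityMeasure (volume : Measure Ω)]
    (Nt Nr : ℕ) (hNt : 1 ≤ Nt) (hNr : 1 ≤ Nr)
    (q : ℕ) (hq : q = min Nt Nr)
    (δt δr : ℝ) (hδt : 0 ≤ δt) (hδr : 0 ≤ δr)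
    (Λ : Ω → ℝ) (hΛmeas : Measurable Λ) (hΛnonneg : ∀ ω, 0 ≤ Λ ω)
    (hΛsq : Integrable (fun ω => Λ ω ^ 2))
    (hmom1 : (q : ℝ) * ∫ ω, Λ ω = Nr * Nt)
    (C : ℝ → ℝ)
    (hC : ∀ ρ : ℝ, C ρ = q * ∫ ω, Real.logb 2
        (1 + (ρ / Nt * Λ ω) / ((ρ * δt ^ 2 / Nt) * Λ ω + ρ * δr ^ 2 + 1))) :
    HasDerivWithinAt C ((Nr : ℝ) / Real.log 2) (Ici 0) 0 ∧
      Tendsto (fun ρ : ℝ => ρ / C ρ) (nhdsWithin 0 (Ioi 0))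
        (nhds (Real.log 2 / Nr)) :=
  min_energy_per_bit_general Nt Nr hNt hNr q δt δr Λ hΛmeas hΛnonneg hΛsq hmom1 C hC
end

section
/- Let $N_t, N_r \ge 1$ be integers, $\rho \ge 0$, $\delta_t \ge 0$, $\delta_r \ge 0$ reals, and let $H$ be an $N_r \times N_t$ complex matrix satisfying $H H^H = N_t \, I_{N_r}$. Then, with $\Phi(\rho) = (\rho \delta_t^2/N_t) H H^H + (\rho \delta_r^2 + 1) I_{N_r}$, one has $\log_2 \det\big(I_{N_r} + (\rho/N_t) H H^H \Phi(\rho)^{-1}\big) = N_r \log_2\Big(1 + \dfrac{\rho}{\rho\delta_t^2 + \rho\delta_r^2 + 1}\Big)$ (the determinant being a positive real number). -/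
open Matrix

/-- Channel hardening with many transmit antennas: if `H Hᴴ = N_t I`, then the
instantaneous capacity `log₂ det(I + (ρ/N_t) H Hᴴ Φ(ρ)⁻¹)`, with
`Φ(ρ) = (ρ δt²/N_t) H Hᴴ + (ρ δr² + 1) I`, equals
`N_r log₂(1 + ρ/(ρ δt² + ρ δr² + 1))` (the determinant being a positive real
number). -/
theorem capacity_channel_hardening_tx
    (Nt Nr : ℕ) (hNt : 1 ≤ Nt) (hNr : 1 ≤ Nr)
    (ρ δt δr : ℝ) (hρ : 0 ≤ ρ) (hδt : 0 ≤ δt) (hδr : 0 ≤ δr)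
    (H : Matrix (Fin Nr) (Fin Nt) ℂ)
    (hH : H * Hᴴ = ((Nt : ℂ)) • (1 : Matrix (Fin Nr) (Fin Nr) ℂ)) :
    ((1 : Matrix (Fin Nr) (Fin Nr) ℂ)
        + ((ρ / Nt : ℝ) : ℂ) • (H * Hᴴ)
          * (((ρ * δt ^ 2 / Nt : ℝ) : ℂ) • (H * Hᴴ)
              + ((ρ * δr ^ 2 + 1 : ℝ) : ℂ)
                  • (1 : Matrix (Fin Nr) (Fin Nr) ℂ))⁻¹).det.im = 0 ∧
    0 < ((1 : Matrix (Fin Nr) (Fin Nr) ℂ)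
        + ((ρ / Nt : ℝ) : ℂ) • (H * Hᴴ)
          * (((ρ * δt ^ 2 / Nt : ℝ) : ℂ) • (H * Hᴴ)
              + ((ρ * δr ^ 2 + 1 : ℝ) : ℂ)
                  • (1 : Matrix (Fin Nr) (Fin Nr) ℂ))⁻¹).det.re ∧
    Real.logb 2
        ((1 : Matrix (Fin Nr) (Fin Nr) ℂ)
            + ((ρ / Nt : ℝ) : ℂ) • (H * Hᴴ)
              * (((ρ * δt ^ 2 / Nt : ℝ) : ℂ) • (H * Hᴴ)
                  + ((ρ * δr ^ 2 + 1 : ℝ) : ℂ)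
                      • (1 : Matrix (Fin Nr) (Fin Nr) ℂ))⁻¹).det.re
      = Nr * Real.logb 2 (1 + ρ / (ρ * δt ^ 2 + ρ * δr ^ 2 + 1)) := by

  have hNt0 : (Nt : ℝ) ≠ 0 := Nat.cast_ne_zero.mpr (by omega)
  set c : ℝ := ρ * δt ^ 2 + ρ * δr ^ 2 + 1 with hc_def
  have hc : 0 < c := by positivity
  have hcC : ((c : ℝ) : ℂ) ≠ 0 := by exact_mod_cast hc.ne'
  have hNtC : (Nt : ℂ) ≠ 0 := by exact_mod_cast hNt0
  have hΦ : (((ρ * δt ^ 2 / Nt : ℝ) : ℂ) • (H * Hᴴ)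
              + ((ρ * δr ^ 2 + 1 : ℝ) : ℂ) • (1 : Matrix (Fin Nr) (Fin Nr) ℂ))
      = ((c : ℝ) : ℂ) • (1 : Matrix (Fin Nr) (Fin Nr) ℂ) := by
    rw [hH, smul_smul, ← add_smul]
    congr 1
    rw [hc_def]
    push_cast
    field_simp
    ring
  have hinv : (((c : ℝ) : ℂ) • (1 : Matrix (Fin Nr) (Fin Nr) ℂ))⁻¹
      = (((c : ℝ) : ℂ))⁻¹ • (1 : Matrix (Fin Nr) (Fin Nr) ℂ) := by
    apply Matrix.inv_eq_left_inv
    rw [smul_mul_smul_comm, one_mul, inv_mul_cancel₀ hcC, one_smul]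
  have key : ((1 : Matrix (Fin Nr) (Fin Nr) ℂ)
        + ((ρ / Nt : ℝ) : ℂ) • (H * Hᴴ)
          * (((ρ * δt ^ 2 / Nt : ℝ) : ℂ) • (H * Hᴴ)
              + ((ρ * δr ^ 2 + 1 : ℝ) : ℂ)
                  • (1 : Matrix (Fin Nr) (Fin Nr) ℂ))⁻¹)
      = (((1 + ρ / c : ℝ) : ℂ)) • (1 : Matrix (Fin Nr) (Fin Nr) ℂ) := by
    rw [hΦ, hinv, hH, smul_smul, smul_mul_smul_comm, one_mul]
    nth_rewrite 1 [← one_smul ℂ (1 : Matrix (Fin Nr) (Fin Nr) ℂ)]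
    rw [← add_smul]
    congr 1
    rw [hc_def]
    push_cast
    have hcC' : (↑ρ * ↑δt ^ 2 + ↑ρ * ↑δr ^ 2 + 1 : ℂ) ≠ 0 := by
      rw [hc_def] at hcC; push_cast at hcC; exact hcC
    field_simp
  have hdet : ((1 : Matrix (Fin Nr) (Fin Nr) ℂ)
        + ((ρ / Nt : ℝ) : ℂ) • (H * Hᴴ)
          * (((ρ * δt ^ 2 / Nt : ℝ) : ℂ) • (H * Hᴴ)
              + ((ρ * δr ^ 2 + 1 : ℝ) : ℂ)
                  • (1 : Matrix (Fin Nr) (Fin Nr) ℂ))⁻¹).det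
      = Complex.ofReal ((1 + ρ / c) ^ Nr) := by
    rw [key, Matrix.det_smul, Matrix.det_one, mul_one, Fintype.card_fin,
      Complex.ofReal_pow]
  rw [hdet]
  have hpos : 0 < (1 + ρ / c) ^ Nr := by positivity
  refine ⟨Complex.ofReal_im _, by rw [Complex.ofReal_re]; exact hpos, ?_⟩
  simp only [Complex.ofReal_re]
  rw [Real.logb_pow]
end

section
/- Let $N_t \ge 1$ be an integer and $\rho > 0$, $\delta_t > 0$, $\delta_r \ge 0$ real numbers. Then $\lim_{x \to \infty} N_t \log_2\Big(1 + \dfrac{\rho\, (x/N_t)}{\rho \delta_t^2 (x/N_t) + \rho \delta_r^2 + 1}\Big) = N_t \log_2\Big(1 + \dfrac{1}{\delta_t^2}\Big)$. In particular, the limit depends only on $N_t$ and the transmitter impairment level $\delta_t$, and not on $\rho$ or $\delta_r$. -/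
open Filter

/-- Channel hardening with many receive antennas: as `x → ∞`,
`N_t log₂(1 + ρ(x/N_t)/(ρ δt²(x/N_t) + ρ δr² + 1))` converges to the capacity
ceiling `N_t log₂(1 + 1/δt²)`, which depends only on `N_t` and `δt`. -/
theorem capacity_ceiling_many_rx_antennas
    (Nt : ℕ) (hNt : 1 ≤ Nt) (ρ δt δr : ℝ)
    (hρ : 0 < ρ) (hδt : 0 < δt) (hδr : 0 ≤ δr) :
    Tendsto
      (fun x : ℝ =>
        (Nt : ℝ) * Real.logb 2
          (1 + ρ * (x / Nt) / (ρ * δt ^ 2 * (x / Nt) + ρ * δr ^ 2 + 1)))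
      atTop
      (nhds ((Nt : ℝ) * Real.logb 2 (1 + 1 / δt ^ 2))) := by
  have hNt' : (0:ℝ) < Nt := by exact_mod_cast hNt
  have hδt2 : (0:ℝ) < δt ^ 2 := pow_pos hδt 2
  have hc : (0:ℝ) < ρ * δr ^ 2 + 1 := by positivity
  -- inner ratio tends to 1/δt²
  have h1 : Tendsto (fun x : ℝ => ρ * (x / Nt) / (ρ * δt ^ 2 * (x / Nt) + ρ * δr ^ 2 + 1))
      atTop (nhds (1 / δt ^ 2)) := by
    have hden : Tendsto (fun x : ℝ => ρ * δt ^ 2 + (ρ * δr ^ 2 + 1) * (Nt / x))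
        atTop (nhds (ρ * δt ^ 2)) := by
      have h0 : Tendsto (fun x : ℝ => (Nt : ℝ) / x) atTop (nhds 0) :=
        Tendsto.div_atTop tendsto_const_nhds tendsto_id
      have h1 : Tendsto (fun x : ℝ => ρ * δt ^ 2 + (ρ * δr ^ 2 + 1) * ((Nt:ℝ) / x))
          atTop (nhds (ρ * δt ^ 2 + (ρ * δr ^ 2 + 1) * 0)) :=
        Tendsto.add tendsto_const_nhds (Tendsto.mul tendsto_const_nhds h0)
      simpa using h1
    have hq : Tendsto (fun x : ℝ => ρ / (ρ * δt ^ 2 + (ρ * δr ^ 2 + 1) * (Nt / x)))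
        atTop (nhds (ρ / (ρ * δt ^ 2))) :=
      tendsto_const_nhds.div hden (by positivity)
    have heq : (fun x : ℝ => ρ / (ρ * δt ^ 2 + (ρ * δr ^ 2 + 1) * (Nt / x)))
        =ᶠ[atTop] (fun x : ℝ => ρ * (x / Nt) / (ρ * δt ^ 2 * (x / Nt) + ρ * δr ^ 2 + 1)) := by
      filter_upwards [eventually_gt_atTop (0:ℝ)] with x hx
      field_simp
      ring
    have : ρ / (ρ * δt ^ 2) = 1 / δt ^ 2 := by
      field_simp
    rw [this] at hq
    exact hq.congr' heq
  have hpos : (0:ℝ) < 1 + 1 / δt ^ 2 := by positivity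
  have hlog : Tendsto
      (fun x : ℝ => Real.logb 2
        (1 + ρ * (x / Nt) / (ρ * δt ^ 2 * (x / Nt) + ρ * δr ^ 2 + 1)))
      atTop (nhds (Real.logb 2 (1 + 1 / δt ^ 2))) := by
    have hcont : ContinuousAt (Real.logb 2) (1 + 1 / δt ^ 2) :=
      Real.continuousAt_logb (ne_of_gt hpos)
    exact hcont.tendsto.comp (tendsto_const_nhds.add h1)
  exact tendsto_const_nhds.mul hlog
end
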